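/- arXiv:2007.03831 — 9 statements merged into one kernel-verified Lean document; each statement's English description precedes it below -/
import Mathlib

section
/- Let p₁, p₂, p₃, p₄ be pairwise distinct nonzero complex numbers and let x, y be nonzero complex numbers such that pᵢ ≠ x and pᵢ ≠ y for all i, and such that p₁p₂ ≠ xy and p₃p₄ ≠ xy. Set qᵢ = pᵢ/((pᵢ − x)(pᵢ − y)) and rᵢ = pᵢ + xy/pᵢ for i = 1,2,3,4. Then cr(q₁,q₂,q₃,q₄) = cr(r₁,r₂,r₃,r₄). In particular, the cross-ratio of the four points qᵢ depends only on the product z = xy and not on x and y individually. -/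
/-!
Both `p ↦ p / ((p - x) * (p - y))` and `p ↦ p + x * y / p` have differences of the form
`± (a - b) * (a * b - x * y) / (w a * w b)` for a per-point weight `w`. The weights cancel in the
cross-ratio and the signs cancel pairwise, so both cross-ratios equal the same expression in the
`pᵢ` and `x * y`.
-/

/-- The cross-ratio `[q₁ : q₂ ; q₃ : q₄]` of an ordered quadruple of complex numbers. -/
noncomputable def cr (q₁ q₂ q₃ q₄ : ℂ) : ℂ :=
  ((q₄ - q₁) * (q₂ - q₃)) / ((q₂ - q₁) * (q₄ - q₃))

section Differences

variable {K : Type*} [Field K]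

lemma div_mul_sub_sub_div_mul_sub_sub {a b x y : K}
    (ha : (a - x) * (a - y) ≠ 0) (hb : (b - x) * (b - y) ≠ 0) :
    a / ((a - x) * (a - y)) - b / ((b - x) * (b - y))
      = (b - a) * (a * b - x * y) / ((a - x) * (a - y) * ((b - x) * (b - y))) := by
  rw [div_sub_div _ _ ha hb]
  ring

lemma add_div_sub_add_div {a b : K} (z : K) (ha : a ≠ 0) (hb : b ≠ 0) :
    (a + z / a) - (b + z / b) = (a - b) * (a * b - z) / (a * b) := by
  field_simp
  ring

end Differences

lemma cr_eq_of_sub_eq_div_mul (f w : ℂ → ℂ) (D : ℂ → ℂ → ℂ) {p₁ p₂ p₃ p₄ : ℂ}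
    (hw₁ : w p₁ ≠ 0) (hw₂ : w p₂ ≠ 0) (hw₃ : w p₃ ≠ 0) (hw₄ : w p₄ ≠ 0)
    (hf : ∀ a b, w a ≠ 0 → w b ≠ 0 → f a - f b = D a b / (w a * w b)) :
    cr (f p₁) (f p₂) (f p₃) (f p₄) = D p₄ p₁ * D p₂ p₃ / (D p₂ p₁ * D p₄ p₃) := by
  rw [cr, hf _ _ hw₄ hw₁, hf _ _ hw₂ hw₃, hf _ _ hw₂ hw₁, hf _ _ hw₄ hw₃,
    div_mul_div_comm, div_mul_div_comm, div_div_div_eq]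
  have hweights : w p₄ * w p₁ * (w p₂ * w p₃) = w p₂ * w p₁ * (w p₄ * w p₃) := by ring
  rw [hweights, mul_comm (D p₄ p₁ * D p₂ p₃), mul_div_mul_left _ _ (by positivity)]

theorem crossRatio_nodal_cubic_depends_only_on_product_general
    (p₁ p₂ p₃ p₄ x y : ℂ)
    (hp₁ : p₁ ≠ 0) (hp₂ : p₂ ≠ 0) (hp₃ : p₃ ≠ 0) (hp₄ : p₄ ≠ 0)
    (h1x : p₁ ≠ x) (h2x : p₂ ≠ x) (h3x : p₃ ≠ x) (h4x : p₄ ≠ x)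
    (h1y : p₁ ≠ y) (h2y : p₂ ≠ y) (h3y : p₃ ≠ y) (h4y : p₄ ≠ y) :
    cr (p₁ / ((p₁ - x) * (p₁ - y))) (p₂ / ((p₂ - x) * (p₂ - y)))
       (p₃ / ((p₃ - x) * (p₃ - y))) (p₄ / ((p₄ - x) * (p₄ - y)))
      = cr (p₁ + x * y / p₁) (p₂ + x * y / p₂) (p₃ + x * y / p₃) (p₄ + x * y / p₄) := by
  have hw {p : ℂ} (hpx : p ≠ x) (hpy : p ≠ y) : (p - x) * (p - y) ≠ 0 :=
    mul_ne_zero (sub_ne_zero.mpr hpx) (sub_ne_zero.mpr hpy)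
  have hq := cr_eq_of_sub_eq_div_mul (fun p ↦ p / ((p - x) * (p - y)))
    (fun p ↦ (p - x) * (p - y)) (fun a b ↦ (b - a) * (a * b - x * y))
    (hw h1x h1y) (hw h2x h2y) (hw h3x h3y) (hw h4x h4y)
    (fun _ _ ↦ div_mul_sub_sub_div_mul_sub_sub)
  have hr := cr_eq_of_sub_eq_div_mul (fun p ↦ p + x * y / p) id
    (fun a b ↦ (a - b) * (a * b - x * y)) hp₁ hp₂ hp₃ hp₄
    (fun _ _ ↦ add_div_sub_add_div (x * y))
  rw [hq, hr]
  ring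

theorem crossRatio_nodal_cubic_depends_only_on_product
    (p₁ p₂ p₃ p₄ x y : ℂ)
    (hp₁ : p₁ ≠ 0) (hp₂ : p₂ ≠ 0) (hp₃ : p₃ ≠ 0) (hp₄ : p₄ ≠ 0)
    (h12 : p₁ ≠ p₂) (h13 : p₁ ≠ p₃) (h14 : p₁ ≠ p₄)
    (h23 : p₂ ≠ p₃) (h24 : p₂ ≠ p₄) (h34 : p₃ ≠ p₄)
    (hx : x ≠ 0) (hy : y ≠ 0)
    (h1x : p₁ ≠ x) (h2x : p₂ ≠ x) (h3x : p₃ ≠ x) (h4x : p₄ ≠ x)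
    (h1y : p₁ ≠ y) (h2y : p₂ ≠ y) (h3y : p₃ ≠ y) (h4y : p₄ ≠ y)
    (hA : p₁ * p₂ ≠ x * y) (hB : p₃ * p₄ ≠ x * y) :
    cr (p₁ / ((p₁ - x) * (p₁ - y))) (p₂ / ((p₂ - x) * (p₂ - y)))
       (p₃ / ((p₃ - x) * (p₃ - y))) (p₄ / ((p₄ - x) * (p₄ - y)))
      = cr (p₁ + x * y / p₁) (p₂ + x * y / p₂) (p₃ + x * y / p₃) (p₄ + x * y / p₄) :=
  crossRatio_nodal_cubic_depends_only_on_product_general p₁ p₂ p₃ p₄ x y hp₁ hp₂ hp₃ hp₄ h1x h2x h3x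
    h4x h1y h2y h3y h4y
end

section
/- Let p₁, p₂, p₃, p₄ be pairwise distinct nonzero complex numbers, let z be a complex number, and set qᵢ = pᵢ + z/pᵢ. Then: (i) q₁ = q₄ or q₂ = q₃ holds if and only if z = p₁p₄ or z = p₂p₃; (ii) q₁ = q₃ or q₂ = q₄ holds if and only if z = p₁p₃ or z = p₂p₄; (iii) q₁ = q₂ or q₃ = q₄ holds if and only if z = p₁p₂ or z = p₃p₄. (Consequently the scattering amplitude function Λ of the irreducible nodal genus-1 curve satisfies Λ⁻¹(0) = {p₁p₄, p₂p₃}, Λ⁻¹(1) = {p₁p₃, p₂p₄}, and the poles of Λ are {p₁p₂, p₃p₄}, so the marked points are determined only up to the Klein 4-group permuting them in pairs.) -/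
lemma aux_eq (a b z : ℂ) (ha : a ≠ 0) (hb : b ≠ 0) (hab : a ≠ b) :
    a + z / a = b + z / b ↔ z = a * b := by
  constructor
  · intro h
    have h' : a * a * b + z * b = b * b * a + z * a := by
      field_simp at h; linear_combination h
    have h2 : (a - b) * (z - a * b) = 0 := by linear_combination -h'
    rcases mul_eq_zero.mp h2 with h3 | h3
    · exact absurd (sub_eq_zero.mp h3) hab
    · exact sub_eq_zero.mp h3
  · intro h; subst h; field_simp; ring

theorem scattering_amplitude_nodal_genus_one_special_fibers
    (p₁ p₂ p₃ p₄ z : ℂ)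
    (hp₁ : p₁ ≠ 0) (hp₂ : p₂ ≠ 0) (hp₃ : p₃ ≠ 0) (hp₄ : p₄ ≠ 0)
    (h12 : p₁ ≠ p₂) (h13 : p₁ ≠ p₃) (h14 : p₁ ≠ p₄)
    (h23 : p₂ ≠ p₃) (h24 : p₂ ≠ p₄) (h34 : p₃ ≠ p₄) :
    ((p₁ + z / p₁ = p₄ + z / p₄ ∨ p₂ + z / p₂ = p₃ + z / p₃) ↔
      (z = p₁ * p₄ ∨ z = p₂ * p₃)) ∧
    ((p₁ + z / p₁ = p₃ + z / p₃ ∨ p₂ + z / p₂ = p₄ + z / p₄) ↔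
      (z = p₁ * p₃ ∨ z = p₂ * p₄)) ∧
    ((p₁ + z / p₁ = p₂ + z / p₂ ∨ p₃ + z / p₃ = p₄ + z / p₄) ↔
      (z = p₁ * p₂ ∨ z = p₃ * p₄)) := by
  refine ⟨?_, ?_, ?_⟩ <;>
    rw [aux_eq _ _ _ (by assumption) (by assumption) (by assumption),
        aux_eq _ _ _ (by assumption) (by assumption) (by assumption)]
end

section
/- Let p₁, p₂, p₃, p₄ be pairwise distinct nonzero complex numbers and let z, w be complex numbers with z ∉ {p₁p₂, p₃p₄} and w ∉ {p₁p₂, p₃p₄}. Then cr(p₁ + z/p₁, p₂ + z/p₂, p₃ + z/p₃, p₄ + z/p₄) = cr(p₁ + w/p₁, p₂ + w/p₂, p₃ + w/p₃, p₄ + w/p₄) if and only if z = w or z·w = p₁p₂p₃p₄. In other words, the scattering amplitude map of the irreducible nodal genus-1 curve is a double cover with deck transformation z ↦ p₁p₂p₃p₄/z. -/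
lemma sub_aux (u a b : ℂ) (ha : a ≠ 0) (hb : b ≠ 0) :
    (b + u / b) - (a + u / a) = (b - a) * (a * b - u) / (a * b) := by
  field_simp; ring

lemma cr_eval (p₁ p₂ p₃ p₄ u : ℂ)
    (hp₁ : p₁ ≠ 0) (hp₂ : p₂ ≠ 0) (hp₃ : p₃ ≠ 0) (hp₄ : p₄ ≠ 0) :
    cr (p₁ + u / p₁) (p₂ + u / p₂) (p₃ + u / p₃) (p₄ + u / p₄)
      = ((p₄ - p₁) * (p₂ - p₃) * (p₁ * p₄ - u) * (p₂ * p₃ - u))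
        / ((p₂ - p₁) * (p₄ - p₃) * (p₁ * p₂ - u) * (p₃ * p₄ - u)) := by
  unfold cr
  rw [sub_aux u p₁ p₄ hp₁ hp₄, sub_aux u p₃ p₂ hp₃ hp₂,
      sub_aux u p₁ p₂ hp₁ hp₂, sub_aux u p₃ p₄ hp₃ hp₄]
  rw [div_mul_div_comm, div_mul_div_comm,
      show p₁ * p₄ * (p₃ * p₂) = p₁ * p₂ * (p₃ * p₄) by ring,
      div_div_div_cancel_right₀]
  · congr 1 <;> ring
  · exact mul_ne_zero (mul_ne_zero hp₁ hp₂) (mul_ne_zero hp₃ hp₄)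

theorem scattering_amplitude_nodal_genus_one_double_cover
    (p₁ p₂ p₃ p₄ z w : ℂ)
    (hp₁ : p₁ ≠ 0) (hp₂ : p₂ ≠ 0) (hp₃ : p₃ ≠ 0) (hp₄ : p₄ ≠ 0)
    (h12 : p₁ ≠ p₂) (h13 : p₁ ≠ p₃) (h14 : p₁ ≠ p₄)
    (h23 : p₂ ≠ p₃) (h24 : p₂ ≠ p₄) (h34 : p₃ ≠ p₄)
    (hz12 : z ≠ p₁ * p₂) (hz34 : z ≠ p₃ * p₄)
    (hw12 : w ≠ p₁ * p₂) (hw34 : w ≠ p₃ * p₄) :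
    cr (p₁ + z / p₁) (p₂ + z / p₂) (p₃ + z / p₃) (p₄ + z / p₄)
      = cr (p₁ + w / p₁) (p₂ + w / p₂) (p₃ + w / p₃) (p₄ + w / p₄) ↔
    z = w ∨ z * w = p₁ * p₂ * p₃ * p₄ := by
  have d12 : p₂ - p₁ ≠ 0 := sub_ne_zero.mpr h12.symm
  have d34 : p₄ - p₃ ≠ 0 := sub_ne_zero.mpr h34.symm
  have d13 : p₁ - p₃ ≠ 0 := sub_ne_zero.mpr h13
  have d24 : p₄ - p₂ ≠ 0 := sub_ne_zero.mpr h24.symm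
  have d14 : p₄ - p₁ ≠ 0 := sub_ne_zero.mpr h14.symm
  have d23 : p₂ - p₃ ≠ 0 := sub_ne_zero.mpr h23
  have ez12 : p₁ * p₂ - z ≠ 0 := sub_ne_zero.mpr (fun h => hz12 h.symm)
  have ez34 : p₃ * p₄ - z ≠ 0 := sub_ne_zero.mpr (fun h => hz34 h.symm)
  have ew12 : p₁ * p₂ - w ≠ 0 := sub_ne_zero.mpr (fun h => hw12 h.symm)
  have ew34 : p₃ * p₄ - w ≠ 0 := sub_ne_zero.mpr (fun h => hw34 h.symm)
  have hDz : (p₂ - p₁) * (p₄ - p₃) * (p₁ * p₂ - z) * (p₃ * p₄ - z) ≠ 0 :=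
    mul_ne_zero (mul_ne_zero (mul_ne_zero d12 d34) ez12) ez34
  have hDw : (p₂ - p₁) * (p₄ - p₃) * (p₁ * p₂ - w) * (p₃ * p₄ - w) ≠ 0 :=
    mul_ne_zero (mul_ne_zero (mul_ne_zero d12 d34) ew12) ew34
  rw [cr_eval p₁ p₂ p₃ p₄ z hp₁ hp₂ hp₃ hp₄, cr_eval p₁ p₂ p₃ p₄ w hp₁ hp₂ hp₃ hp₄,
      div_eq_div_iff hDz hDw, ← sub_eq_zero]
  have factored :
      ((p₄ - p₁) * (p₂ - p₃) * (p₁ * p₄ - z) * (p₂ * p₃ - z))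
          * ((p₂ - p₁) * (p₄ - p₃) * (p₁ * p₂ - w) * (p₃ * p₄ - w))
        - ((p₄ - p₁) * (p₂ - p₃) * (p₁ * p₄ - w) * (p₂ * p₃ - w))
          * ((p₂ - p₁) * (p₄ - p₃) * (p₁ * p₂ - z) * (p₃ * p₄ - z))
      = ((p₄ - p₁) * (p₂ - p₃) * (p₂ - p₁) * (p₄ - p₃) * (p₁ - p₃) * (p₄ - p₂))
          * ((z - w) * (z * w - p₁ * p₂ * p₃ * p₄)) := by
    ring
  rw [factored, mul_eq_zero]
  have hC : (p₄ - p₁) * (p₂ - p₃) * (p₂ - p₁) * (p₄ - p₃) * (p₁ - p₃) * (p₄ - p₂) ≠ 0 :=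
    mul_ne_zero (mul_ne_zero (mul_ne_zero (mul_ne_zero (mul_ne_zero d14 d23) d12) d34) d13) d24
  simp only [hC, false_or, mul_eq_zero, sub_eq_zero]
end

section
/- Let p₁, p₂, p₃, p₄ be pairwise distinct nonzero complex numbers and let z₀ be a complex number with z₀² = p₁p₂p₃p₄, z₀ ≠ p₁p₂ and z₀ ≠ p₃p₄. Let Λ : ℂ → ℂ be the function Λ(z) = cr(p₁ + z/p₁, p₂ + z/p₂, p₃ + z/p₃, p₄ + z/p₄). Then the derivative of Λ vanishes at z₀: Λ′(z₀) = 0. (Thus the two branch points of the scattering amplitude double cover, i.e. the two roots of f₂(λ) = 0, are the values Λ(±√(p₁p₂p₃p₄)).) -/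
open Filter Topology

section Involution

variable {𝕜 F : Type*} [NontriviallyNormedField 𝕜] [NormedAddCommGroup F] [NormedSpace 𝕜 F]
  [IsAddTorsionFree F]

theorem deriv_eq_zero_of_eventually_comp_eq {f : 𝕜 → F} {σ : 𝕜 → 𝕜} {x : 𝕜}
    (hσ : HasDerivAt σ (-1) x) (hσx : σ x = x) (hf : ∀ᶠ z in 𝓝 x, f (σ z) = f z) :
    deriv f x = 0 := by
  by_cases hfx : DifferentiableAt 𝕜 f x
  · have hcomp : HasDerivAt (f ∘ σ) ((-1 : 𝕜) • deriv f x) x :=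
      HasDerivAt.scomp x (by rw [hσx]; exact hfx.hasDerivAt) hσ
    have hneg : HasDerivAt f (-deriv f x) x := by
      simpa using hcomp.congr_of_eventuallyEq (hf.mono fun z hz => hz.symm)
    exact self_eq_neg.mp hneg.deriv
  · exact deriv_zero_of_not_differentiableAt hfx

end Involution

section Algebra

variable {K : Type*} [Field K]

theorem add_div_sub_add_div_eq {p q : K} (hp : p ≠ 0) (hq : q ≠ 0) (z : K) :
    (q + z / q) - (p + z / p) = (q - p) / (p * q) * (p * q - z) := by
  field_simp
  ring

theorem sub_const_div_mul_sub_const_div {a b z : K} (hz : z ≠ 0) :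
    (a - a * b / z) * (b - a * b / z) = a * b / z ^ 2 * ((a - z) * (b - z)) := by
  field_simp
  ring

theorem quadratic_ratio_const_div_eq {a b c d P z : K} (hab : a * b = P) (hcd : c * d = P)
    (hP : P ≠ 0) (hz : z ≠ 0) :
    (a - P / z) * (b - P / z) / ((c - P / z) * (d - P / z))
      = (a - z) * (b - z) / ((c - z) * (d - z)) := by
  have hPz : P / z ^ 2 ≠ 0 := div_ne_zero hP (pow_ne_zero 2 hz)
  have hnum := sub_const_div_mul_sub_const_div (a := a) (b := b) hz
  have hden := sub_const_div_mul_sub_const_div (a := c) (b := d) hz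
  rw [hab] at hnum
  rw [hcd] at hden
  rw [hnum, hden, mul_div_mul_left _ _ hPz]

end Algebra

theorem cr_add_div_eq {p₁ p₂ p₃ p₄ : ℂ} (hp₁ : p₁ ≠ 0) (hp₂ : p₂ ≠ 0) (hp₃ : p₃ ≠ 0)
    (hp₄ : p₄ ≠ 0) (z : ℂ) :
    cr (p₁ + z / p₁) (p₂ + z / p₂) (p₃ + z / p₃) (p₄ + z / p₄)
      = cr p₁ p₂ p₃ p₄ *
        ((p₁ * p₄ - z) * (p₃ * p₂ - z) / ((p₁ * p₂ - z) * (p₃ * p₄ - z))) := by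
  have hcr : (p₄ - p₁) / (p₁ * p₄) * ((p₂ - p₃) / (p₃ * p₂))
      / ((p₂ - p₁) / (p₁ * p₂) * ((p₄ - p₃) / (p₃ * p₄))) = cr p₁ p₂ p₃ p₄ := by
    rw [div_mul_div_comm, div_mul_div_comm,
      show p₁ * p₄ * (p₃ * p₂) = p₁ * p₂ * (p₃ * p₄) by ring,
      div_div_div_cancel_right₀ (by simp [*]), cr]
  rw [cr, add_div_sub_add_div_eq hp₁ hp₄, add_div_sub_add_div_eq hp₃ hp₂,
    add_div_sub_add_div_eq hp₁ hp₂, add_div_sub_add_div_eq hp₃ hp₄,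
    mul_mul_mul_comm _ (p₁ * p₄ - z), mul_mul_mul_comm _ (p₁ * p₂ - z), mul_div_mul_comm, hcr]

theorem scattering_amplitude_nodal_genus_one_branch_points_general
    (p₁ p₂ p₃ p₄ z₀ : ℂ)
    (hp₁ : p₁ ≠ 0) (hp₂ : p₂ ≠ 0) (hp₃ : p₃ ≠ 0) (hp₄ : p₄ ≠ 0)
    (hz : z₀ ^ 2 = p₁ * p₂ * p₃ * p₄) :
    deriv (fun z : ℂ =>
      cr (p₁ + z / p₁) (p₂ + z / p₂) (p₃ + z / p₃) (p₄ + z / p₄)) z₀ = 0 := by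
  set P := p₁ * p₂ * p₃ * p₄
  have hP : P ≠ 0 := by simp [P, *]
  have hz₀ : z₀ ≠ 0 := by
    rintro rfl
    exact hP (by simpa using hz.symm)
  have hσ : HasDerivAt (fun z => P / z) (-1) z₀ := by
    simpa [div_eq_mul_inv, ← hz, hz₀] using (hasDerivAt_inv hz₀).const_mul P
  have hσz₀ : P / z₀ = z₀ := by rw [div_eq_iff hz₀, ← hz, sq]
  refine deriv_eq_zero_of_eventually_comp_eq hσ hσz₀ ?_
  filter_upwards [eventually_ne_nhds hz₀] with z hz
  simp only [cr_add_div_eq hp₁ hp₂ hp₃ hp₄]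
  rw [quadratic_ratio_const_div_eq (by ring) (by ring) hP hz]

theorem scattering_amplitude_nodal_genus_one_branch_points
    (p₁ p₂ p₃ p₄ z₀ : ℂ)
    (hp₁ : p₁ ≠ 0) (hp₂ : p₂ ≠ 0) (hp₃ : p₃ ≠ 0) (hp₄ : p₄ ≠ 0)
    (h12 : p₁ ≠ p₂) (h13 : p₁ ≠ p₃) (h14 : p₁ ≠ p₄)
    (h23 : p₂ ≠ p₃) (h24 : p₂ ≠ p₄) (h34 : p₃ ≠ p₄)
    (hz : z₀ ^ 2 = p₁ * p₂ * p₃ * p₄)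
    (hz12 : z₀ ≠ p₁ * p₂) (hz34 : z₀ ≠ p₃ * p₄) :
    deriv (fun z : ℂ =>
      cr (p₁ + z / p₁) (p₂ + z / p₂) (p₃ + z / p₃) (p₄ + z / p₄)) z₀ = 0 :=
  scattering_amplitude_nodal_genus_one_branch_points_general p₁ p₂ p₃ p₄ z₀ hp₁ hp₂ hp₃ hp₄ hz
end

section
/- Let a, b, b′ ∈ ℂ and x, x′ ∈ ℂ with x ≠ 0, x′ ≠ 0, b ≠ 0 and b·x′ = b′·x. Let p₁, p₂, p₃, p₄ ∈ ℂ satisfy p₁ ≠ x, p₂ ≠ x, p₃ ≠ x′, p₄ ≠ x′, p₁ ≠ p₂ and p₃ ≠ p₄, and set z = x/x′. Then cr(a + b/(p₁ − x), a + b/(p₂ − x), a + b′/(p₃ − x′), a + b′/(p₄ − x′)) = ((z·p₄ − p₁)(p₂ − z·p₃)) / ((p₂ − p₁) · z · (p₄ − p₃)). -/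
theorem cr_add_left (a q₁ q₂ q₃ q₄ : ℂ) :
    cr (a + q₁) (a + q₂) (a + q₃) (a + q₄) = cr q₁ q₂ q₃ q₄ := by
  simp only [cr, add_sub_add_left_eq_sub]

theorem cr_sub_right (x q₁ q₂ q₃ q₄ : ℂ) :
    cr (q₁ - x) (q₂ - x) (q₃ - x) (q₄ - x) = cr q₁ q₂ q₃ q₄ := by
  simp only [cr, sub_sub_sub_cancel_right]

theorem cr_mul_left {b : ℂ} (hb : b ≠ 0) (q₁ q₂ q₃ q₄ : ℂ) :
    cr (b * q₁) (b * q₂) (b * q₃) (b * q₄) = cr q₁ q₂ q₃ q₄ := by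
  simp only [cr, ← mul_sub, mul_mul_mul_comm b]
  exact mul_div_mul_left _ _ (mul_ne_zero hb hb)

theorem cr_inv {q₁ q₂ q₃ q₄ : ℂ} (h₁ : q₁ ≠ 0) (h₂ : q₂ ≠ 0) (h₃ : q₃ ≠ 0) (h₄ : q₄ ≠ 0) :
    cr q₁⁻¹ q₂⁻¹ q₃⁻¹ q₄⁻¹ = cr q₁ q₂ q₃ q₄ := by
  simp only [cr]
  field_simp
  ring

theorem cr_moebius (a b x : ℂ) (hb : b ≠ 0) {q₁ q₂ q₃ q₄ : ℂ}
    (h₁ : q₁ ≠ x) (h₂ : q₂ ≠ x) (h₃ : q₃ ≠ x) (h₄ : q₄ ≠ x) :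
    cr (a + b / (q₁ - x)) (a + b / (q₂ - x)) (a + b / (q₃ - x)) (a + b / (q₄ - x))
      = cr q₁ q₂ q₃ q₄ := by
  simp only [div_eq_mul_inv]
  rw [cr_add_left, cr_mul_left hb, cr_inv (sub_ne_zero.2 h₁) (sub_ne_zero.2 h₂)
    (sub_ne_zero.2 h₃) (sub_ne_zero.2 h₄), cr_sub_right]

theorem div_sub_eq_of_mul_eq_mul {b b' x x' : ℂ} (hx : x ≠ 0) (hx' : x' ≠ 0)
    (hglue : b * x' = b' * x) (p : ℂ) :
    b' / (p - x') = b / (x / x' * p - x) := by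
  have hb' : b' = b / (x / x') := by
    field_simp
    exact hglue.symm
  rw [hb', div_div, mul_sub, div_mul_cancel₀ x hx']

theorem cr_mul_third_fourth (z p₁ p₂ p₃ p₄ : ℂ) :
    cr p₁ p₂ (z * p₃) (z * p₄) = ((z * p₄ - p₁) * (p₂ - z * p₃)) / ((p₂ - p₁) * z * (p₄ - p₃)) := by
  rw [cr, ← mul_sub, mul_assoc]

theorem scattering_amplitude_two_channel_genus_one_general
    (a b b' x x' p₁ p₂ p₃ p₄ z : ℂ)
    (hx : x ≠ 0) (hx' : x' ≠ 0) (hb : b ≠ 0) (hglue : b * x' = b' * x)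
    (h1 : p₁ ≠ x) (h2 : p₂ ≠ x) (h3 : p₃ ≠ x') (h4 : p₄ ≠ x')
    (hz : z = x / x') :
    cr (a + b / (p₁ - x)) (a + b / (p₂ - x)) (a + b' / (p₃ - x')) (a + b' / (p₄ - x'))
      = ((z * p₄ - p₁) * (p₂ - z * p₃)) / ((p₂ - p₁) * z * (p₄ - p₃)) := by
  have hzx' : z * x' = x := by rw [hz, div_mul_cancel₀ x hx']
  have hz0 : z ≠ 0 := by rintro rfl; exact hx (by simpa using hzx'.symm)
  have hscale : ∀ p, p ≠ x' → z * p ≠ x := fun p hp h =>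
    hp (mul_left_cancel₀ hz0 (h.trans hzx'.symm))
  simp only [div_sub_eq_of_mul_eq_mul hx hx' hglue, ← hz]
  rw [cr_moebius a b x hb h1 h2 (hscale p₃ h3) (hscale p₄ h4), cr_mul_third_fourth]

theorem scattering_amplitude_two_channel_genus_one
    (a b b' x x' p₁ p₂ p₃ p₄ z : ℂ)
    (hx : x ≠ 0) (hx' : x' ≠ 0) (hb : b ≠ 0) (hglue : b * x' = b' * x)
    (h1 : p₁ ≠ x) (h2 : p₂ ≠ x) (h3 : p₃ ≠ x') (h4 : p₄ ≠ x')
    (h12 : p₁ ≠ p₂) (h34 : p₃ ≠ p₄)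
    (hz : z = x / x') :
    cr (a + b / (p₁ - x)) (a + b / (p₂ - x)) (a + b' / (p₃ - x')) (a + b' / (p₄ - x'))
      = ((z * p₄ - p₁) * (p₂ - z * p₃)) / ((p₂ - p₁) * z * (p₄ - p₃)) :=
  scattering_amplitude_two_channel_genus_one_general a b b' x x' p₁ p₂ p₃ p₄ z hx hx' hb hglue h1 h2
    h3 h4 hz
end

section
/- Let p₁, p₂, p₃, p₄ be complex numbers with K := (p₂ − p₁)(p₄ − p₃) ≠ 0, and define Λ : ℂ → ℂ by Λ(z) = ((z·p₄ − p₁)(p₂ − z·p₃)) / (z·K). Then for every z ≠ 0 the derivative of Λ satisfies (z·K·Λ′(z))² = (K·Λ(z) − p₂p₄ − p₁p₃)² − 4·p₁p₂p₃p₄. (Equivalently, dz/z = (p₂ − p₁)(p₄ − p₃)·dλ/√(f₂(λ)), where f₂(λ) = (λK − p₂p₄ − p₁p₃)² − 4p₁p₂p₃p₄ is the discriminant of the defining quadratic equation λ·z·(p₂−p₁)(p₄−p₃) = (z·p₄ − p₁)(p₂ − z·p₃) viewed as a quadratic in z.) -/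
/-!
On `ℂ*` the amplitude is a Laurent trinomial: `K·Λ(z) = a z + b + c / z` with `a = -p₃p₄`,
`b = p₂p₄ + p₁p₃`, `c = -p₁p₂`. For such a trinomial `z L'(z) = a z - c / z` while
`L(z) - b = a z + c / z`, so `(z L'(z))² = (L(z) - b)² - 4ac`.
-/

open Filter Topology

section LaurentTrinomial

variable {𝕜 : Type*} [NontriviallyNormedField 𝕜] (a b c : 𝕜) {z : 𝕜}

theorem hasDerivAt_mul_add_add_div (hz : z ≠ 0) :
    HasDerivAt (fun w => a * w + b + c / w) (a - c / z ^ 2) z := by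
  have hinv : HasDerivAt (fun w => c / w) (-(c / z ^ 2)) z := by
    simpa [div_eq_mul_inv, mul_neg] using (hasDerivAt_inv hz).const_mul c
  simpa [sub_eq_add_neg] using (((hasDerivAt_id z).const_mul a).add_const b).fun_add hinv

theorem sq_mul_deriv_mul_add_add_div (hz : z ≠ 0) :
    (z * deriv (fun w => a * w + b + c / w) z) ^ 2 = (a * z + c / z) ^ 2 - 4 * a * c := by
  rw [(hasDerivAt_mul_add_add_div a b c hz).deriv]
  field_simp
  ring

end LaurentTrinomial

theorem amplitude_eq_mul_add_add_div {F : Type*} [Field F] (p₁ p₂ p₃ p₄ K : F) {w : F}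
    (hw : w ≠ 0) :
    (w * p₄ - p₁) * (p₂ - w * p₃) / (w * K)
      = (-(p₃ * p₄) * w + (p₂ * p₄ + p₁ * p₃) + -(p₁ * p₂) / w) / K := by
  rw [mul_comm w K, ← div_div, div_right_comm]
  congr 1
  field_simp
  ring

theorem scattering_amplitude_two_channel_form_identity
    (p₁ p₂ p₃ p₄ : ℂ) (hK : (p₂ - p₁) * (p₄ - p₃) ≠ 0) :
    ∀ z : ℂ, z ≠ 0 →
      (z * ((p₂ - p₁) * (p₄ - p₃)) *
          deriv (fun w : ℂ =>
            ((w * p₄ - p₁) * (p₂ - w * p₃)) / (w * ((p₂ - p₁) * (p₄ - p₃)))) z) ^ 2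
        = (((p₂ - p₁) * (p₄ - p₃)) *
              (((z * p₄ - p₁) * (p₂ - z * p₃)) / (z * ((p₂ - p₁) * (p₄ - p₃))))
            - p₂ * p₄ - p₁ * p₃) ^ 2
          - 4 * (p₁ * p₂ * p₃ * p₄) := by
  intro z hz
  set K := (p₂ - p₁) * (p₄ - p₃)
  have hΛ : (fun w : ℂ => (w * p₄ - p₁) * (p₂ - w * p₃) / (w * K))
      =ᶠ[𝓝 z] fun w => (-(p₃ * p₄) * w + (p₂ * p₄ + p₁ * p₃) + -(p₁ * p₂) / w) / K :=
    (eventually_ne_nhds hz).mono fun w hw => amplitude_eq_mul_add_add_div p₁ p₂ p₃ p₄ K hw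
  rw [hΛ.deriv_eq, deriv_div_const, amplitude_eq_mul_add_add_div p₁ p₂ p₃ p₄ K hz,
    ← mul_div_assoc, mul_right_comm z K, mul_div_cancel_right₀ _ hK, mul_div_cancel₀ _ hK,
    sq_mul_deriv_mul_add_add_div _ _ _ hz]
  ring
end

section
/- Let U, V, W be polynomials over ℂ and set f = V² + U·W. Assume f is squarefree and nonconstant (0 < deg f). Let M be the 2×2 matrix over ℂ[z] with rows (V, U) and (W, −V). Then every constant matrix A ∈ Mat₂(ℂ) that commutes with M (i.e. A·M = M·A, where A is viewed as a matrix of constant polynomials) is a scalar matrix: A = c·I for some c ∈ ℂ. In particular, PGL₂(ℂ) acts freely by conjugation on the set S(f) of such triples (U, V, W). -/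
open Polynomial Matrix

theorem pgl2_acts_freely_on_matrix_model
    (U V W f : Polynomial ℂ) (hf : f = V ^ 2 + U * W)
    (hsq : Squarefree f) (hdeg : 0 < f.natDegree)
    (M : Matrix (Fin 2) (Fin 2) (Polynomial ℂ)) (hM : M = !![V, U; W, -V])
    (A : Matrix (Fin 2) (Fin 2) ℂ)
    (hcomm : A.map Polynomial.C * M = M * A.map Polynomial.C) :
    ∃ c : ℂ, A = c • (1 : Matrix (Fin 2) (Fin 2) ℂ) := by
  set a := A 0 0 with ha
  set b := A 0 1 with hb'
  set c := A 1 0 with hc'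
  set d := A 1 1 with hd'
  have hmap : A.map Polynomial.C = !![C a, C b; C c, C d] := by
    rw [Matrix.eta_fin_two A]
    ext i j
    fin_cases i <;> fin_cases j <;> rfl
  rw [hmap, hM, Matrix.mul_fin_two, Matrix.mul_fin_two, ← Matrix.ext_iff] at hcomm
  have e00 := hcomm 0 0
  have e01 := hcomm 0 1
  have e10 := hcomm 1 0
  simp only [Matrix.of_apply, Matrix.cons_val', Matrix.cons_val_zero, Matrix.cons_val_one,
    Matrix.head_cons, Matrix.empty_val', Matrix.cons_val_fin_one, Matrix.head_fin_const]
    at e00 e01 e10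
  have hbW : C b * W = C c * U := by linear_combination e00
  have hU2 : C a * U - C d * U = 2 * C b * V := by linear_combination e01
  have hW2 : 2 * C c * V = C a * W - C d * W := by linear_combination e10
  have degf : ∀ P : Polynomial ℂ, P * P ∣ f → P.natDegree = 0 := fun P h =>
    Polynomial.natDegree_eq_zero_of_isUnit (hsq P h)
  have hVcase : U = 0 → False := by
    intro hU0
    have hVd : V.natDegree = 0 := degf V (by rw [hf, hU0]; exact ⟨1, by ring⟩)
    have : f.natDegree = 0 := by
      rw [hf, hU0]
      simp [Polynomial.natDegree_pow, hVd]
    omega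
  have hb : b = 0 := by
    by_contra hb
    have hm : 4 * C b * C b * f
        = (C a * C a - 2 * C a * C d + C d * C d + 4 * C b * C c) * (U * U) := by
      rw [hf]
      linear_combination (-(C a * U) + C d * U - 2 * C b * V) * hU2 + 4 * C b * U * hbW
    have u1 : IsUnit (C b : Polynomial ℂ) := isUnit_C.mpr (isUnit_iff_ne_zero.mpr hb)
    have u4 : IsUnit (4 : Polynomial ℂ) := by
      rw [← map_ofNat (C : ℂ →+* Polynomial ℂ) 4]
      exact isUnit_C.mpr (by norm_num)
    have hu : IsUnit ((4 : Polynomial ℂ) * C b * C b) := (u4.mul u1).mul u1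
    have hdvd : U * U ∣ f := by
      have h1 : U * U ∣ (4 * C b * C b) * f :=
        ⟨C a * C a - 2 * C a * C d + C d * C d + 4 * C b * C c, by rw [hm]; ring⟩
      exact (IsUnit.dvd_mul_left hu).mp h1
    have hUdeg : U.natDegree = 0 := degf U hdvd
    have hVdeg : V.natDegree = 0 := by
      have h2 : C (2 * b) * V = C (a - d) * U := by
        simp only [C_mul, C_sub, map_ofNat]
        linear_combination -hU2
      have h3 : (C (2 * b) * V).natDegree ≤ 0 := by
        rw [h2]
        exact Polynomial.natDegree_mul_le.trans (by simp [hUdeg])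
      rw [Polynomial.natDegree_C_mul (mul_ne_zero two_ne_zero hb)] at h3
      omega
    have hWdeg : W.natDegree = 0 := by
      have h3 : (C b * W).natDegree ≤ 0 := by
        rw [hbW]
        exact Polynomial.natDegree_mul_le.trans (by simp [hUdeg])
      rw [Polynomial.natDegree_C_mul hb] at h3
      omega
    have hle : f.natDegree ≤ 0 := by
      rw [hf]
      refine (Polynomial.natDegree_add_le _ _).trans ?_
      simp only [Polynomial.natDegree_pow, hVdeg, Nat.mul_zero]
      exact max_le le_rfl (Polynomial.natDegree_mul_le.trans (by simp [hUdeg, hWdeg]))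
    omega
  have hc : c = 0 := by
    by_contra hc
    apply hVcase
    have h0 : C c * U = 0 := by rw [← hbW, hb]; simp
    rcases mul_eq_zero.mp h0 with h | h
    · exact absurd (Polynomial.C_eq_zero.mp h) hc
    · exact h
  have had : a = d := by
    by_contra had
    apply hVcase
    have h0 : C (a - d) * U = 0 := by
      rw [C_sub]
      rw [hb, map_zero] at hU2
      linear_combination hU2
    rcases mul_eq_zero.mp h0 with h | h
    · exact absurd (sub_eq_zero.mp (Polynomial.C_eq_zero.mp h)) had
    · exact h
  refine ⟨a, ?_⟩
  ext i j
  fin_cases i <;> fin_cases j <;>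
    simp [Matrix.smul_apply, Matrix.one_apply, ← ha, ← hb', ← hc', ← hd', hb, hc, had]
end

section
/- Fix an integer g ≥ 0. Let f be a squarefree complex polynomial of degree exactly 2g+2, and let U, V, W be complex polynomials of degree at most g+1 with V² + U·W = f. Then for every complex polynomial P of degree at most 2g+2 there exist complex polynomials u, v, w of degree at most g+1 such that W·u + 2·V·v + U·w = P. (This is the Jacobian criterion form of the statement that the affine variety S(f) is smooth for any polynomial f without multiple roots.) -/
/-!
Separability gives `a f + b f' = 1`, and expanding `f' = 2 V V' + U' W + U W'` turns this into a
Bézout identity `A U + B V + D W = 1`. Since `deg (V² + U W) = 2(g+1)`, one of `U, V, W`, say `X`,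
has degree exactly `g+1`. Writing `P = P (A U + B V + D W)` and reducing the coefficients of the
two other polynomials modulo `X` leaves them of degree `≤ g+1`; the coefficient of `X` then also has
degree `≤ g+1`, because the whole sum has degree `≤ 2(g+1)`.
-/

open Polynomial

namespace Polynomial

theorem Separable.exists_mul_add_mul_add_mul_eq_one_of_sq_add_mul {R : Type*} [CommRing R]
    {U V W : R[X]} (h : (V ^ 2 + U * W).Separable) :
    ∃ A B D : R[X], A * U + B * V + D * W = 1 := by
  obtain ⟨a, b, hab⟩ := h
  refine ⟨a * W + b * derivative W, a * V + 2 * b * derivative V, b * derivative U, ?_⟩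
  simp only [derivative_add, derivative_sq, derivative_mul, C_ofNat] at hab
  linear_combination hab

theorem degree_eq_or_of_natDegree_sq_add_mul_eq {R : Type*} [CommRing R] {n : ℕ} (hn : 0 < n)
    {U V W : R[X]} (hU : U.natDegree ≤ n) (hV : V.natDegree ≤ n) (hW : W.natDegree ≤ n)
    (h : (V ^ 2 + U * W).natDegree = 2 * n) :
    U.degree = n ∨ V.degree = n ∨ W.degree = n := by
  simp only [degree_eq_iff_natDegree_eq_of_pos hn]
  by_contra! ⟨hU', hV', -⟩
  have hV2 : (V ^ 2).natDegree ≤ 2 * n - 1 :=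
    (natDegree_pow_le_of_le 2 (show V.natDegree ≤ n - 1 by omega)).trans (by omega)
  have hUW : (U * W).natDegree ≤ 2 * n - 1 :=
    (natDegree_mul_le_of_le (show U.natDegree ≤ n - 1 by omega) hW).trans (by omega)
  have := natDegree_add_le_of_degree_le hV2 hUW
  omega

variable {K : Type*} [Field K]

theorem exists_natDegree_le_mul_add_mul_add_mul_eq_of_degree_eq {n : ℕ} {X Y Z A B D : K[X]}
    (hX : X.degree = n) (hY : Y.natDegree ≤ n) (hZ : Z.natDegree ≤ n)
    (hbez : A * X + B * Y + D * Z = 1) (P : K[X]) (hP : P.natDegree ≤ 2 * n) :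
    ∃ x y z : K[X], x.natDegree ≤ n ∧ y.natDegree ≤ n ∧ z.natDegree ≤ n ∧
      X * x + Y * y + Z * z = P := by
  have hX0 : X ≠ 0 := fun h => by simp [h] at hX
  have hmod (Q : K[X]) : (Q % X).natDegree ≤ n :=
    natDegree_le_of_degree_le ((degree_mod_lt Q hX0).le.trans hX.le)
  set x := A * P + Y * (B * P / X) + Z * (D * P / X)
  have hsum : X * x + Y * (B * P % X) + Z * (D * P % X) = P := by
    linear_combination P * hbez + Y * EuclideanDomain.div_add_mod (B * P) X
      + Z * EuclideanDomain.div_add_mod (D * P) X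
  refine ⟨x, _, _, ?_, hmod _, hmod _, hsum⟩
  have hXx : (X * x).natDegree ≤ 2 * n := by
    rw [show X * x = P - Y * (B * P % X) - Z * (D * P % X) by linear_combination hsum]
    exact (natDegree_sub_le_of_le (natDegree_sub_le_of_le hP (natDegree_mul_le_of_le hY (hmod _)))
      (natDegree_mul_le_of_le hZ (hmod _))).trans (by omega)
  rcases eq_or_ne x 0 with hx | hx
  · simp [hx]
  · rw [natDegree_mul hX0 hx, natDegree_eq_of_degree_eq_some hX] at hXx
    omega

theorem exists_natDegree_le_mul_add_mul_add_mul_eq {n : ℕ} {U V W A B D : K[X]}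
    (hU : U.natDegree ≤ n) (hV : V.natDegree ≤ n) (hW : W.natDegree ≤ n)
    (hmax : U.degree = n ∨ V.degree = n ∨ W.degree = n)
    (hbez : A * U + B * V + D * W = 1) (P : K[X]) (hP : P.natDegree ≤ 2 * n) :
    ∃ x y z : K[X], x.natDegree ≤ n ∧ y.natDegree ≤ n ∧ z.natDegree ≤ n ∧
      U * x + V * y + W * z = P := by
  rcases hmax with hU' | hV' | hW'
  · exact exists_natDegree_le_mul_add_mul_add_mul_eq_of_degree_eq hU' hV hW hbez P hP
  · obtain ⟨y, x, z, hy, hx, hz, h⟩ := exists_natDegree_le_mul_add_mul_add_mul_eq_of_degree_eq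
      (A := B) (B := A) (D := D) hV' hU hW (by linear_combination hbez) P hP
    exact ⟨x, y, z, hx, hy, hz, by linear_combination h⟩
  · obtain ⟨z, x, y, hz, hx, hy, h⟩ := exists_natDegree_le_mul_add_mul_add_mul_eq_of_degree_eq
      (A := D) (B := A) (D := B) hW' hU hV (by linear_combination hbez) P hP
    exact ⟨x, y, z, hx, hy, hz, by linear_combination h⟩

end Polynomial

theorem matrix_model_smooth
    (g : ℕ) (f U V W : Polynomial ℂ)
    (hsq : Squarefree f) (hdeg : f.natDegree = 2 * g + 2)
    (hU : U.natDegree ≤ g + 1) (hV : V.natDegree ≤ g + 1) (hW : W.natDegree ≤ g + 1)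
    (hf : V ^ 2 + U * W = f) :
    ∀ P : Polynomial ℂ, P.natDegree ≤ 2 * g + 2 →
      ∃ u v w : Polynomial ℂ,
        u.natDegree ≤ g + 1 ∧ v.natDegree ≤ g + 1 ∧ w.natDegree ≤ g + 1 ∧
        W * u + 2 * V * v + U * w = P := by
  intro P hP
  subst hf
  obtain ⟨A, B, D, hbez⟩ := (PerfectField.separable_iff_squarefree.mpr hsq)
    |>.exists_mul_add_mul_add_mul_eq_one_of_sq_add_mul
  have hmax := degree_eq_or_of_natDegree_sq_add_mul_eq g.succ_pos hU hV hW (by omega)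
  obtain ⟨w, v, u, hw, hv, hu, hsum⟩ :=
    exists_natDegree_le_mul_add_mul_add_mul_eq hU hV hW hmax hbez P (by omega)
  have htwo : (2 : ℂ[X]) * C 2⁻¹ = 1 := by
    rw [← C_ofNat, ← C_mul, mul_inv_cancel₀ two_ne_zero, C_1]
  exact ⟨u, C 2⁻¹ * v, w, hu, (natDegree_C_mul_le _ _).trans hv, hw,
    by linear_combination hsum + V * v * htwo⟩
end

section
/- Let a and b be positive real numbers. Then the function x ↦ 1/√((x² + a²)(x² + b²)) is integrable on ℝ, and its integral is invariant under the arithmetic–geometric mean step: ∫_ℝ dx/√((x² + a²)(x² + b²)) = ∫_ℝ dx/√((x² + a·b)(x² + ((a + b)/2)²)). -/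
/-!
Newman's substitution `t = (x - ab/x)/2` maps `(0, ∞)` increasingly onto `ℝ`, with
`dt = (x² + ab)/(2x²) dx`, `t² + ab = (x² + ab)²/(4x²)` and
`t² + ((a + b)/2)² = (x² + a²)(x² + b²)/(4x²)`. Pulled back along it, the integrand for
`(√(ab), (a + b)/2)` becomes twice the integrand for `(a, b)` on `(0, ∞)`, and the latter is even.
-/

open MeasureTheory Set

noncomputable section

def ellipticIntegrand (p q x : ℝ) : ℝ := 1 / √((x ^ 2 + p) * (x ^ 2 + q))

lemma integrable_inv_sq_add {c : ℝ} (hc : 0 < c) : Integrable fun x : ℝ => (x ^ 2 + c)⁻¹ := by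
  have hs : 0 < √c := Real.sqrt_pos.2 hc
  refine ((integrable_inv_one_add_sq.comp_div hs.ne').const_mul c⁻¹).congr
    (Filter.Eventually.of_forall fun x => ?_)
  have hc' : √c ^ 2 = c := Real.sq_sqrt hc.le
  dsimp only
  rw [div_pow, hc']
  field_simp
  ring

lemma ellipticIntegrand_le_inv_sq_add_min {p q : ℝ} (hp : 0 < p) (hq : 0 < q) (x : ℝ) :
    ellipticIntegrand p q x ≤ (x ^ 2 + min p q)⁻¹ := by
  have hsq : (x ^ 2 + min p q) ^ 2 ≤ (x ^ 2 + p) * (x ^ 2 + q) := by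
    rw [sq]
    gcongr
    exacts [min_le_left p q, min_le_right p q]
  have hle : x ^ 2 + min p q ≤ √((x ^ 2 + p) * (x ^ 2 + q)) :=
    Real.le_sqrt_of_sq_le hsq
  rw [ellipticIntegrand, one_div]
  exact inv_anti₀ (by positivity) hle

lemma integrable_ellipticIntegrand {p q : ℝ} (hp : 0 < p) (hq : 0 < q) :
    Integrable (ellipticIntegrand p q) := by
  refine (integrable_inv_sq_add (lt_min hp hq)).mono' ?_ (Filter.Eventually.of_forall fun x => ?_)
  · exact (continuous_const.div (by fun_prop) fun x => (Real.sqrt_pos.2 (by positivity)).ne')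
      |>.aestronglyMeasurable
  · rw [Real.norm_eq_abs, abs_of_nonneg (by unfold ellipticIntegrand; positivity)]
    exact ellipticIntegrand_le_inv_sq_add_min hp hq x

def agmSubst (c x : ℝ) : ℝ := (x - c / x) / 2

lemma hasDerivAt_agmSubst (c : ℝ) {x : ℝ} (hx : x ≠ 0) :
    HasDerivAt (agmSubst c) ((1 + c / x ^ 2) / 2) x := by
  have h : HasDerivAt (fun y => (y - c * y⁻¹) / 2) ((1 - c * -(x ^ 2)⁻¹) / 2) x :=
    ((hasDerivAt_id' x).sub ((hasDerivAt_inv hx).const_mul c)).div_const 2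
  convert h using 1
  · ext y
    rw [agmSubst, div_eq_mul_inv c]
  · ring

lemma strictMonoOn_agmSubst {c : ℝ} (hc : 0 ≤ c) : StrictMonoOn (agmSubst c) (Ioi 0) := by
  intro x hx y _ hxy
  have : c / y ≤ c / x := div_le_div_of_nonneg_left hc hx hxy.le
  unfold agmSubst
  linarith

lemma agmSubst_image_Ioi {c : ℝ} (hc : 0 < c) : agmSubst c '' Ioi 0 = univ := by
  refine eq_univ_of_forall fun t => ?_
  -- `x = t + √(t² + c)` is the positive root of `x² - 2tx - c = 0`.
  set s := √(t ^ 2 + c)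
  have hs2 : s ^ 2 = t ^ 2 + c := Real.sq_sqrt (by positivity)
  have hts : |t| < s := by
    rw [← Real.sqrt_sq_eq_abs]
    exact Real.sqrt_lt_sqrt (sq_nonneg t) (by linarith)
  have hx : 0 < t + s := by linarith [neg_abs_le t]
  refine ⟨t + s, hx, ?_⟩
  rw [agmSubst]
  field_simp
  linear_combination hs2

theorem integral_comp_agmSubst {E : Type*} [NormedAddCommGroup E] [NormedSpace ℝ E]
    {c : ℝ} (hc : 0 < c) (g : ℝ → E) :
    ∫ x in Ioi 0, ((1 + c / x ^ 2) / 2) • g (agmSubst c x) = ∫ t, g t := by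
  have hderiv : ∀ x ∈ Ioi (0 : ℝ), HasDerivWithinAt (agmSubst c) ((1 + c / x ^ 2) / 2) (Ioi 0) x :=
    fun x hx => (hasDerivAt_agmSubst c (ne_of_gt hx)).hasDerivWithinAt
  have hsubst := integral_image_eq_integral_abs_deriv_smul measurableSet_Ioi hderiv
    (strictMonoOn_agmSubst hc.le).injOn g
  rw [agmSubst_image_Ioi hc, setIntegral_univ] at hsubst
  rw [hsubst]
  refine setIntegral_congr_fun measurableSet_Ioi fun x _ => ?_
  rw [abs_of_pos (by positivity)]

lemma agmSubst_sq_add_mul_sq_add (a b : ℝ) {x : ℝ} (hx : x ≠ 0) :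
    (agmSubst (a * b) x ^ 2 + a * b) * (agmSubst (a * b) x ^ 2 + ((a + b) / 2) ^ 2) =
      ((x ^ 2 + a * b) / (4 * x ^ 2)) ^ 2 * ((x ^ 2 + a ^ 2) * (x ^ 2 + b ^ 2)) := by
  rw [agmSubst]
  field_simp
  ring

lemma ellipticIntegrand_comp_agmSubst {a b x : ℝ} (hab : 0 ≤ a * b) (hx : x ≠ 0) :
    (1 + a * b / x ^ 2) / 2 * ellipticIntegrand (a * b) (((a + b) / 2) ^ 2) (agmSubst (a * b) x) =
      2 * ellipticIntegrand (a ^ 2) (b ^ 2) x := by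
  rw [ellipticIntegrand, ellipticIntegrand, agmSubst_sq_add_mul_sq_add a b hx,
    Real.sqrt_mul (sq_nonneg _), Real.sqrt_sq (by positivity)]
  field_simp
  ring

theorem agm_invariance_of_elliptic_integral
    (a b : ℝ) (ha : 0 < a) (hb : 0 < b) :
    Integrable (fun x : ℝ => 1 / Real.sqrt ((x ^ 2 + a ^ 2) * (x ^ 2 + b ^ 2))) ∧
    (∫ x : ℝ, 1 / Real.sqrt ((x ^ 2 + a ^ 2) * (x ^ 2 + b ^ 2)))
      = ∫ x : ℝ, 1 / Real.sqrt ((x ^ 2 + a * b) * (x ^ 2 + ((a + b) / 2) ^ 2)) := by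
  have hab : 0 < a * b := mul_pos ha hb
  refine ⟨integrable_ellipticIntegrand (by positivity) (by positivity), ?_⟩
  calc ∫ x, ellipticIntegrand (a ^ 2) (b ^ 2) x
      = ∫ x, ellipticIntegrand (a ^ 2) (b ^ 2) |x| := by simp only [ellipticIntegrand, sq_abs]
    _ = 2 * ∫ x in Ioi 0, ellipticIntegrand (a ^ 2) (b ^ 2) x := integral_comp_abs
    _ = ∫ x in Ioi 0, ((1 + a * b / x ^ 2) / 2) •
          ellipticIntegrand (a * b) (((a + b) / 2) ^ 2) (agmSubst (a * b) x) := by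
      rw [← integral_const_mul]
      exact setIntegral_congr_fun measurableSet_Ioi fun x hx =>
        (ellipticIntegrand_comp_agmSubst hab.le (ne_of_gt hx)).symm
    _ = ∫ t, ellipticIntegrand (a * b) (((a + b) / 2) ^ 2) t := integral_comp_agmSubst hab _
end
end
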